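/- For every i with 1 ≤ i ≤ log2(d)+1 (d a power of 2), there exists a hypergraph G in class C with maximum degree at most 2d such that each full branch of T_G contains i bottom units U_1, ..., U_i with l(U_j) = j for j = 1, ..., i. -/

import Mathlib

/-- The finset of all boolean lists of length `k` (nodes on level `k` of the
complete infinite rooted binary tree). -/
def listsOfLen : ℕ → Finset (List Bool)
  | 0 => {[]}
  | k+1 => (listsOfLen k).image (· ++ [true]) ∪ (listsOfLen k).image (· ++ [false])

/-- The vertex set of the full branch (root-to-`l` path) ending at the node `l`. -/
def prefixesF (l : List Bool) : Finset (List Bool) :=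
  (Finset.range (l.length + 1)).image (fun i => l.take i)

/-- The vertex set of the level-descending path starting at node `p` and
ending at node `p ++ q`. -/
def pathFinset (p q : List Bool) : Finset (List Bool) :=
  (Finset.range (q.length + 1)).image (fun i => p ++ q.take i)

/-- `S` is (the node set of) a rooted binary tree: it contains the root, is
prefix-closed, and every node has either zero or two children. -/
def IsBinTree (S : Finset (List Bool)) : Prop :=
  [] ∈ S ∧ (∀ l ∈ S, ∀ p : List Bool, p <+: l → p ∈ S) ∧
    ∀ l ∈ S, ((l ++ [true]) ∈ S ↔ (l ++ [false]) ∈ S)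

/-- `l` is a leaf of the tree `S`. -/
def IsLeaf (S : Finset (List Bool)) (l : List Bool) : Prop :=
  l ∈ S ∧ (l ++ [true]) ∉ S ∧ (l ++ [false]) ∉ S

/-- The edge `e` is a level-descending path inside the tree `S`. -/
def InTree (S : Finset (List Bool)) (e : Finset (List Bool)) : Prop :=
  ∃ p q : List Bool, (p ++ q) ∈ S ∧ e = pathFinset p q

/-- Degree of vertex `v` in a hypergraph with hyperedge multiset `E`
(counted with multiplicity). -/
def mDegree (E : Multiset (Finset (List Bool))) (v : List Bool) : ℕ :=
  Multiset.countP (fun e => v ∈ e) E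

/-- The number (with multiplicity) of bottom hyperedges of size `L` of the full
branch ending at the leaf `l`: hyperedges contained in the branch and ending at `l`. -/
def bottomCount (E : Multiset (Finset (List Bool))) (l : List Bool) (L : ℕ) : ℕ :=
  Multiset.countP (fun e => l ∈ e ∧ e ⊆ prefixesF l ∧ e.card = L) E

/-- With `d = 2^m`, the full branch ending at leaf `l` contains bottom units of
power `k` whose multiset of lengths is `ls`: a unit of power `k` and length `L`
consists of `2^(m+1+k-L)` hyperedges of size `L` ending at `l`. -/
def HasBottomUnits (m k : ℕ) (E : Multiset (Finset (List Bool))) (l : List Bool)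
    (ls : Multiset ℕ) : Prop :=
  (∀ L ∈ ls, k ≤ L ∧ L ≤ m + 1 + k) ∧
  ∀ L : ℕ, ls.count L * 2 ^ (m + 1 + k - L) ≤ bottomCount E l L

/-!
Take the complete binary tree of depth `n = i - 1`, and at every leaf `l` put, for each
`j ≤ n`, `2^(m-j)` copies of the path formed by the last `j + 1` vertices of the branch
ending at `l`: these form a bottom unit of length `j + 1`. A vertex at depth `t` lies on
at most `2^(n-t)` branches, and on each of them only in the paths with `j ≥ n - t`, whose
multiplicities sum to less than `2^(m-n+t+1)`; so its degree is at most `2^(m+1) = 2d`.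
-/

lemma Multiset.countP_replicate {α : Type*} (p : α → Prop) [DecidablePred p] (n : ℕ)
    (a : α) : (Multiset.replicate n a).countP p = if p a then n else 0 := by
  rw [← Multiset.coe_replicate, Multiset.coe_countP, List.countP_replicate]
  simp

lemma sum_Icc_two_pow_sub_lt {a n m : ℕ} (hnm : n ≤ m) :
    ∑ j ∈ Finset.Icc a n, 2 ^ (m - j) < 2 ^ (m - a + 1) := by
  have hinj : Set.InjOn (m - ·) (Finset.Icc a n : Set ℕ) := by
    intro x hx y hy hxy
    simp only [Finset.coe_Icc, Set.mem_Icc] at hx hy hxy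
    omega
  rw [← Finset.sum_image (f := (2 ^ ·)) hinj]
  refine Nat.geomSum_lt le_rfl fun k hk => ?_
  obtain ⟨j, hj, rfl⟩ := Finset.mem_image.1 hk
  simp only [Finset.mem_Icc] at hj
  omega

lemma mem_listsOfLen {k : ℕ} {l : List Bool} : l ∈ listsOfLen k ↔ l.length = k := by
  induction k generalizing l with
  | zero => simp [listsOfLen, List.length_eq_zero_iff]
  | succ k ih =>
    simp only [listsOfLen, Finset.mem_union, Finset.mem_image, ih]
    constructor
    · rintro (⟨a, ha, rfl⟩ | ⟨a, ha, rfl⟩) <;> simp [ha]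
    · intro hl
      have hne : l ≠ [] := by rintro rfl; simp at hl
      have hlen : l.dropLast.length = k := by rw [List.length_dropLast, hl]; rfl
      have hsplit := List.dropLast_append_getLast hne
      cases hlast : l.getLast hne with
      | true => exact Or.inl ⟨l.dropLast, hlen, by rw [← hlast]; exact hsplit⟩
      | false => exact Or.inr ⟨l.dropLast, hlen, by rw [← hlast]; exact hsplit⟩

lemma card_listsOfLen_le (k : ℕ) : (listsOfLen k).card ≤ 2 ^ k := by
  induction k with
  | zero => simp [listsOfLen]
  | succ k ih =>
    calc (listsOfLen (k + 1)).card
        ≤ ((listsOfLen k).image (· ++ [true])).card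
          + ((listsOfLen k).image (· ++ [false])).card := Finset.card_union_le _ _
      _ ≤ 2 ^ k + 2 ^ k := Nat.add_le_add (Finset.card_image_le.trans ih)
          (Finset.card_image_le.trans ih)
      _ = 2 ^ (k + 1) := by ring

lemma card_filter_prefix_listsOfLen_le (v : List Bool) (n : ℕ) :
    ((listsOfLen n).filter (v <+: ·)).card ≤ 2 ^ (n - v.length) := by
  have hsub : (listsOfLen n).filter (v <+: ·) ⊆ (listsOfLen (n - v.length)).image (v ++ ·) := by
    intro l hl
    rw [Finset.mem_filter, mem_listsOfLen] at hl
    obtain ⟨⟨w, rfl⟩, hlen⟩ := And.symm hl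
    rw [List.length_append] at hlen
    exact Finset.mem_image.2 ⟨w, mem_listsOfLen.2 (by omega), rfl⟩
  exact (Finset.card_le_card hsub).trans (Finset.card_image_le.trans (card_listsOfLen_le _))

def completeTree (n : ℕ) : Finset (List Bool) :=
  (Finset.range (n + 1)).biUnion listsOfLen

lemma mem_completeTree {n : ℕ} {l : List Bool} : l ∈ completeTree n ↔ l.length ≤ n := by
  simp [completeTree, mem_listsOfLen]

lemma isBinTree_completeTree (n : ℕ) : IsBinTree (completeTree n) := by
  refine ⟨mem_completeTree.2 (Nat.zero_le n), fun l hl p hp => ?_, fun l _ => ?_⟩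
  · exact mem_completeTree.2 (hp.length_le.trans (mem_completeTree.1 hl))
  · simp [mem_completeTree]

lemma length_eq_of_isLeaf_completeTree {n : ℕ} {l : List Bool}
    (hl : IsLeaf (completeTree n) l) : l.length = n := by
  obtain ⟨hmem, hchild, -⟩ := hl
  rw [mem_completeTree] at hmem hchild
  simp only [List.length_append, List.length_singleton] at hchild
  omega

section BranchTail

lemma mem_pathFinset {p q x : List Bool} :
    x ∈ pathFinset p q ↔ ∃ s ≤ q.length, p ++ q.take s = x := by
  simp [pathFinset]

lemma card_pathFinset (p q : List Bool) : (pathFinset p q).card = q.length + 1 := by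
  rw [pathFinset, Finset.card_image_of_injOn, Finset.card_range]
  intro a ha b hb hab
  simp only [Finset.coe_range, Set.mem_Iio] at ha hb
  have := congrArg List.length hab
  simp only [List.length_append, List.length_take] at this
  omega

lemma take_mem_prefixesF (l : List Bool) (t : ℕ) : l.take t ∈ prefixesF l := by
  simp only [prefixesF, Finset.mem_image, Finset.mem_range]
  exact ⟨min t l.length, by omega, by simp⟩

/-- The path formed by the last `j + 1` vertices of the branch ending at `l`. -/
def branchTail (l : List Bool) (j : ℕ) : Finset (List Bool) :=
  pathFinset (l.take (l.length - j)) (l.drop (l.length - j))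

variable {l : List Bool} {j : ℕ}

lemma exists_take_of_mem_branchTail {x : List Bool} (hx : x ∈ branchTail l j) :
    ∃ t, l.length - j ≤ t ∧ x = l.take t := by
  obtain ⟨s, -, rfl⟩ := mem_pathFinset.1 hx
  exact ⟨l.length - j + s, by omega, (List.take_add ..).symm⟩

lemma prefix_of_mem_branchTail {x : List Bool} (hx : x ∈ branchTail l j) :
    x <+: l ∧ l.length - j ≤ x.length := by
  obtain ⟨t, ht, rfl⟩ := exists_take_of_mem_branchTail hx
  exact ⟨List.take_prefix _ _, by rw [List.length_take]; omega⟩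

lemma self_mem_branchTail : l ∈ branchTail l j :=
  mem_pathFinset.2 ⟨_, le_rfl, by rw [List.take_length, List.take_append_drop]⟩

lemma branchTail_subset_prefixesF : branchTail l j ⊆ prefixesF l := by
  intro x hx
  obtain ⟨t, -, rfl⟩ := exists_take_of_mem_branchTail hx
  exact take_mem_prefixesF l t

lemma card_branchTail (hj : j ≤ l.length) : (branchTail l j).card = j + 1 := by
  rw [branchTail, card_pathFinset, List.length_drop]
  omega

lemma inTree_branchTail {S : Finset (List Bool)} (hl : l ∈ S) : InTree S (branchTail l j) :=
  ⟨_, _, by rwa [List.take_append_drop], rfl⟩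

end BranchTail

section TailHypergraph

def tailHypergraph (m n : ℕ) : Multiset (Finset (List Bool)) :=
  ∑ l ∈ listsOfLen n, ∑ j ∈ Finset.range (n + 1),
    Multiset.replicate (2 ^ (m - j)) (branchTail l j)

variable {m n : ℕ}

lemma inTree_of_mem_tailHypergraph {e : Finset (List Bool)} (he : e ∈ tailHypergraph m n) :
    InTree (completeTree n) e := by
  obtain ⟨l, hl, he⟩ := Multiset.mem_sum.1 he
  obtain ⟨j, -, he⟩ := Multiset.mem_sum.1 he
  rw [Multiset.eq_of_mem_replicate he]
  exact inTree_branchTail (mem_completeTree.2 (mem_listsOfLen.1 hl).le)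

lemma mDegree_tailHypergraph (v : List Bool) :
    mDegree (tailHypergraph m n) v = ∑ l ∈ listsOfLen n, ∑ j ∈ Finset.range (n + 1),
      if v ∈ branchTail l j then 2 ^ (m - j) else 0 := by
  rw [mDegree, tailHypergraph, ← Multiset.coe_countPAddMonoidHom]
  simp only [map_sum, Multiset.coe_countPAddMonoidHom, Multiset.countP_replicate]

lemma mDegree_tailHypergraph_le (hnm : n ≤ m) (v : List Bool) :
    mDegree (tailHypergraph m n) v ≤ 2 * 2 ^ m := by
  set t := v.length
  have hsub : (listsOfLen n ×ˢ Finset.range (n + 1)).filter (fun p => v ∈ branchTail p.1 p.2)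
      ⊆ (listsOfLen n).filter (v <+: ·) ×ˢ Finset.Icc (n - t) n := by
    intro p hp
    simp only [Finset.mem_filter, Finset.mem_product, mem_listsOfLen, Finset.mem_range] at hp
    obtain ⟨⟨hl, hj⟩, hv⟩ := hp
    obtain ⟨hpre, hlen⟩ := prefix_of_mem_branchTail hv
    simp only [Finset.mem_product, Finset.mem_filter, mem_listsOfLen, Finset.mem_Icc]
    exact ⟨⟨hl, hpre⟩, by omega, by omega⟩
  calc mDegree (tailHypergraph m n) v
      = ∑ p ∈ (listsOfLen n ×ˢ Finset.range (n + 1)).filter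
          (fun p => v ∈ branchTail p.1 p.2), 2 ^ (m - p.2) := by
        rw [mDegree_tailHypergraph, Finset.sum_filter, Finset.sum_product]
    _ ≤ ∑ p ∈ (listsOfLen n).filter (v <+: ·) ×ˢ Finset.Icc (n - t) n, 2 ^ (m - p.2) :=
        Finset.sum_le_sum_of_subset hsub
    _ = ((listsOfLen n).filter (v <+: ·)).card * ∑ j ∈ Finset.Icc (n - t) n, 2 ^ (m - j) := by
        simp only [Finset.sum_product, Finset.sum_const, smul_eq_mul]
    _ ≤ 2 ^ (n - t) * 2 ^ (m - (n - t) + 1) :=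
        Nat.mul_le_mul (card_filter_prefix_listsOfLen_le v n) (sum_Icc_two_pow_sub_lt hnm).le
    _ = 2 * 2 ^ m := by
        rw [← pow_add, ← pow_succ']
        congr 1
        omega

lemma two_pow_le_bottomCount_tailHypergraph {l : List Bool} (hl : l.length = n) {j : ℕ}
    (hj : j ≤ n) : 2 ^ (m - j) ≤ bottomCount (tailHypergraph m n) l (j + 1) := by
  have hle : Multiset.replicate (2 ^ (m - j)) (branchTail l j) ≤ tailHypergraph m n :=
    calc Multiset.replicate (2 ^ (m - j)) (branchTail l j)
        ≤ ∑ j ∈ Finset.range (n + 1), Multiset.replicate (2 ^ (m - j)) (branchTail l j) :=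
          Finset.single_le_sum (f := fun j => Multiset.replicate (2 ^ (m - j)) (branchTail l j))
            (fun _ _ => zero_le) (Finset.mem_range.2 (Nat.lt_succ_of_le hj))
      _ ≤ tailHypergraph m n :=
          Finset.single_le_sum (f := fun l => ∑ j ∈ Finset.range (n + 1),
            Multiset.replicate (2 ^ (m - j)) (branchTail l j)) (fun _ _ => zero_le)
            (mem_listsOfLen.2 hl)
  refine le_trans (le_of_eq ?_) (Multiset.countP_le_of_le _ hle)
  rw [Multiset.countP_replicate, if_pos ⟨self_mem_branchTail, branchTail_subset_prefixesF,
    card_branchTail (hl ▸ hj)⟩]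

end TailHypergraph

lemma hasBottomUnits_of_nodup {m k : ℕ} {E : Multiset (Finset (List Bool))} {l : List Bool}
    {ls : Multiset ℕ} (hnd : ls.Nodup)
    (h : ∀ L ∈ ls, k ≤ L ∧ L ≤ m + 1 + k ∧ 2 ^ (m + 1 + k - L) ≤ bottomCount E l L) :
    HasBottomUnits m k E l ls := by
  refine ⟨fun L hL => ⟨(h L hL).1, (h L hL).2.1⟩, fun L => ?_⟩
  by_cases hL : L ∈ ls
  · rw [Multiset.count_eq_one_of_mem hnd hL, one_mul]
    exact (h L hL).2.2
  · rw [Multiset.count_eq_zero_of_notMem hL, zero_mul]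
    exact zero_le

/-- For every `1 ≤ i ≤ m + 1` (`d = 2^m` a power of 2) there is a tree
hypergraph with maximum degree at most `2d` such that every full branch contains
`i` bottom units of lengths `1, 2, ..., i`. -/
theorem exists_tree_with_units (m i : ℕ) (hi : 1 ≤ i) (hi2 : i ≤ m + 1) :
    ∃ (S : Finset (List Bool)) (E : Multiset (Finset (List Bool))),
      IsBinTree S ∧ (∀ e ∈ E, InTree S e) ∧
      (∀ v : List Bool, mDegree E v ≤ 2 * 2 ^ m) ∧
      (∀ l : List Bool, IsLeaf S l →
        HasBottomUnits m 0 E l ((Multiset.range i).map (· + 1))) := by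
  obtain ⟨n, rfl⟩ : ∃ n, i = n + 1 := ⟨i - 1, by omega⟩
  refine ⟨completeTree n, tailHypergraph m n, isBinTree_completeTree n,
    fun e he => inTree_of_mem_tailHypergraph he, mDegree_tailHypergraph_le (by omega),
    fun l hl => hasBottomUnits_of_nodup ((Multiset.nodup_range _).map (add_left_injective 1)) ?_⟩
  intro L hL
  obtain ⟨j, hj, rfl⟩ := Multiset.mem_map.1 hL
  rw [Multiset.mem_range] at hj
  refine ⟨Nat.zero_le _, by omega, ?_⟩
  rw [show m + 1 + 0 - (j + 1) = m - j by omega]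
  exact two_pow_le_bottomCount_tailHypergraph (length_eq_of_isLeaf_completeTree hl) (by omega)
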